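/- arXiv:1803.11525 — 2 statements merged into one kernel-verified Lean document; each statement's English description precedes it below -/
import Mathlib

section
/- Signal subspace bound: Let K = U Σ V^T (true SVD, singular values σ_1 ≥ ... ≥ σ_N ≥ 0) and K = Û M V̂^T where Û, V̂ are orthogonal and M is the block matrix [[Σ̂_t, Ŵ_12],[Ŵ_21, Σ̂_0 + W_22]] with Σ̂_t a k×k diagonal matrix. Partition U = [U_k, U_0], V = [V_k, V_0], Û = [Û_k, Û_0], V̂ = [V̂_k, V̂_0] into first k and last N−k columns. If σ_k² > ‖Σ̂_0 + W_22‖₂², then ‖U_k^T Û_0‖₂ ≤ (σ_k ‖Ŵ_21‖₂ + ‖Ŵ_12‖₂ ‖Σ̂_0 + W_22‖₂) / (σ_k² − ‖Σ̂_0 + W_22‖₂²). -/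
/-!
Write `P = Uᵀ Û` and `Q = Vᵀ V̂`, both orthogonal, and let `Σ_k` be the leading `k × k` block of
`Σ`. The two factorizations of `K` give `Σ Q = P M` and, transposing, `Σ P = Q Mᵀ`. Reading off
the upper right blocks yields the coupled identities
`Σ_k Q₁₂ = P₁₁ Ŵ₁₂ + P₁₂ (Σ̂₀ + W₂₂)` and `Σ_k P₁₂ = Q₁₁ Ŵ₂₁ᵀ + Q₁₂ (Σ̂₀ + W₂₂)ᵀ`.
Since `Σ_k ≥ σ_k`, and blocks of orthogonal matrices have norm at most one, this gives
`σ_k ‖Q₁₂‖ ≤ ‖Ŵ₁₂‖ + ‖P₁₂‖ ‖Σ̂₀ + W₂₂‖` and `σ_k ‖P₁₂‖ ≤ ‖Ŵ₂₁‖ + ‖Q₁₂‖ ‖Σ̂₀ + W₂₂‖`;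
eliminating `‖Q₁₂‖` bounds `‖P₁₂‖ = ‖U_kᵀ Û₀‖`.
-/

open Matrix
open scoped Matrix.Norms.L2Operator

namespace Matrix

variable {l m n o : Type*} [Fintype l] [Fintype m] [Fintype n] [Fintype o]

theorem l2_opNorm_transpose [DecidableEq m] [DecidableEq n] (A : Matrix m n ℝ) : ‖Aᵀ‖ = ‖A‖ :=
  l2_opNorm_conjTranspose A

theorem l2_opNorm_le_one_of_transpose_mul_self_eq_one [DecidableEq n] {A : Matrix m n ℝ}
    (h : Aᵀ * A = 1) : ‖A‖ ≤ 1 := by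
  have hA : ‖A‖ * ‖A‖ ≤ 1 := by
    rw [← l2_opNorm_conjTranspose_mul_self, conjTranspose_eq_transpose_of_trivial, h,
      ← diagonal_one, l2_opNorm_diagonal]
    exact (pi_norm_le_iff_of_nonneg zero_le_one).mpr fun _ => norm_one.le
  nlinarith [norm_nonneg A]

theorem l2_opNorm_transpose_mul_le_one [DecidableEq m] [DecidableEq n] [DecidableEq o]
    {A : Matrix m n ℝ} {B : Matrix m o ℝ} (hA : Aᵀ * A = 1) (hB : Bᵀ * B = 1) :
    ‖Aᵀ * B‖ ≤ 1 := by
  calc ‖Aᵀ * B‖ ≤ ‖Aᵀ‖ * ‖B‖ := l2_opNorm_mul _ _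
    _ ≤ 1 * 1 := by
        rw [l2_opNorm_transpose]
        gcongr
        exacts [l2_opNorm_le_one_of_transpose_mul_self_eq_one hA,
          l2_opNorm_le_one_of_transpose_mul_self_eq_one hB]
    _ = 1 := one_mul 1

theorem l2_opNorm_one_submatrix_id_le_one [DecidableEq m] [DecidableEq n] {f : n → m}
    (hf : f.Injective) : ‖(1 : Matrix m m ℝ).submatrix id f‖ ≤ 1 := by
  apply l2_opNorm_le_one_of_transpose_mul_self_eq_one
  rw [transpose_submatrix, transpose_one, ← submatrix_mul _ _ _ _ _ Function.bijective_id,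
    Matrix.one_mul, submatrix_one _ hf]

theorem l2_opNorm_submatrix_le [DecidableEq l] [DecidableEq m] [DecidableEq n] [DecidableEq o]
    (A : Matrix m n ℝ) {f : l → m} {g : o → n} (hf : f.Injective) (hg : g.Injective) :
    ‖A.submatrix f g‖ ≤ ‖A‖ := by
  have hdecomp : A.submatrix f g =
      ((1 : Matrix m m ℝ).submatrix id f)ᵀ * A * (1 : Matrix n n ℝ).submatrix id g := by
    rw [transpose_submatrix, transpose_one, ← submatrix_id_id A,
      ← submatrix_mul _ _ _ _ _ Function.bijective_id,
      ← submatrix_mul _ _ _ _ _ Function.bijective_id, Matrix.one_mul, Matrix.mul_one]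
    rfl
  calc ‖A.submatrix f g‖
      ≤ ‖((1 : Matrix m m ℝ).submatrix id f)ᵀ‖ * ‖A‖ * ‖(1 : Matrix n n ℝ).submatrix id g‖ := by
        rw [hdecomp]
        exact (l2_opNorm_mul _ _).trans
          (mul_le_mul_of_nonneg_right (l2_opNorm_mul _ _) (norm_nonneg _))
    _ ≤ 1 * ‖A‖ * 1 := by
        rw [l2_opNorm_transpose]
        gcongr
        exacts [l2_opNorm_one_submatrix_id_le_one hf, l2_opNorm_one_submatrix_id_le_one hg]
    _ = ‖A‖ := by ring

theorem l2_opNorm_toBlocks₁₁_le [DecidableEq m] [DecidableEq n] (A : Matrix (m ⊕ n) (m ⊕ n) ℝ) :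
    ‖A.toBlocks₁₁‖ ≤ ‖A‖ :=
  l2_opNorm_submatrix_le A Sum.inl_injective Sum.inl_injective

theorem mul_l2_opNorm_le_diagonal_mul [DecidableEq m] [DecidableEq n] {d : m → ℝ} {s : ℝ}
    (hs : 0 < s) (hd : ∀ i, s ≤ d i) (Z : Matrix m n ℝ) : s * ‖Z‖ ≤ ‖diagonal d * Z‖ := by
  have hd₀ : ∀ i, d i ≠ 0 := fun i => (hs.trans_le (hd i)).ne'
  have hinv : ‖(diagonal d⁻¹ : Matrix m m ℝ)‖ ≤ s⁻¹ := by
    rw [l2_opNorm_diagonal]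
    refine (pi_norm_le_iff_of_nonneg (inv_nonneg.mpr hs.le)).mpr fun i => ?_
    rw [Pi.inv_apply, norm_inv, Real.norm_of_nonneg (hs.le.trans (hd i))]
    exact inv_anti₀ hs (hd i)
  have hZ : Z = diagonal d⁻¹ * (diagonal d * Z) := by
    rw [← Matrix.mul_assoc, diagonal_mul_diagonal]
    simp [hd₀]
  calc s * ‖Z‖ ≤ s * (s⁻¹ * ‖diagonal d * Z‖) := by
        gcongr
        conv_lhs => rw [hZ]
        exact (l2_opNorm_mul _ _).trans (by gcongr)
    _ = ‖diagonal d * Z‖ := by field_simp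

theorem mul_l2_opNorm_le_of_diagonal_mul_eq [DecidableEq l] [DecidableEq m] [DecidableEq n]
    [DecidableEq o] {d : m → ℝ} {s : ℝ} (hs : 0 < s) (hd : ∀ i, s ≤ d i) {Y : Matrix m o ℝ}
    {C : Matrix m l ℝ} {W : Matrix l o ℝ} {X : Matrix m n ℝ} {B : Matrix n o ℝ} (hC : ‖C‖ ≤ 1)
    (h : diagonal d * Y = C * W + X * B) : s * ‖Y‖ ≤ ‖W‖ + ‖X‖ * ‖B‖ :=
  calc s * ‖Y‖ ≤ ‖diagonal d * Y‖ := mul_l2_opNorm_le_diagonal_mul hs hd Y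
    _ = ‖C * W + X * B‖ := by rw [h]
    _ ≤ ‖C‖ * ‖W‖ + ‖X‖ * ‖B‖ :=
        (norm_add_le _ _).trans (add_le_add (l2_opNorm_mul _ _) (l2_opNorm_mul _ _))
    _ ≤ ‖W‖ + ‖X‖ * ‖B‖ := by grw [mul_le_of_le_one_left (norm_nonneg W) hC]

variable {R : Type*} [Semiring R]

theorem mul_transpose_mul_eq_of_factorizations {p q m' n' : Type*} [Fintype p] [Fintype q]
    [Fintype m'] [Fintype n'] [DecidableEq m] [DecidableEq n'] {P : Matrix p m R}
    {A : Matrix m n R} {Q : Matrix q n R} {P' : Matrix p m' R} {M : Matrix m' n' R} {Q' : Matrix q n' R}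
    (hP : Pᵀ * P = 1) (hQ' : Q'ᵀ * Q' = 1) (h : P * A * Qᵀ = P' * M * Q'ᵀ) :
    A * (Qᵀ * Q') = Pᵀ * P' * M :=
  calc A * (Qᵀ * Q') = Pᵀ * (P * A * Qᵀ) * Q' := by
        simp only [← Matrix.mul_assoc, hP, Matrix.one_mul]
    _ = Pᵀ * (P' * M * Q'ᵀ) * Q' := by rw [h]
    _ = Pᵀ * P' * M := by simp only [Matrix.mul_assoc, hQ', Matrix.mul_one]

theorem diagonal_mul_toBlocks₁₂_of_eq_submatrix {p : Type*} [Fintype p] [DecidableEq m]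
    [DecidableEq n] [DecidableEq p]
    (e : m ⊕ n ≃ p) {d : p → R} {P Q : Matrix p p R} {A : Matrix m m R} {B : Matrix m n R}
    {C : Matrix n m R} {D : Matrix n n R}
    (h : diagonal d * Q = P * (fromBlocks A B C D).submatrix e.symm e.symm) :
    diagonal (d ∘ e ∘ Sum.inl) * (Q.submatrix e e).toBlocks₁₂ =
      (P.submatrix e e).toBlocks₁₁ * B + (P.submatrix e e).toBlocks₁₂ * D := by
  have h' : diagonal (d ∘ e) * Q.submatrix e e = P.submatrix e e * fromBlocks A B C D := by
    have := congrArg (submatrix · e e) h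
    rwa [← submatrix_mul_equiv _ _ _ e, ← submatrix_mul_equiv _ _ _ e, submatrix_diagonal_equiv,
      submatrix_submatrix, e.symm_comp_self, submatrix_id_id] at this
  have := congrArg toBlocks₁₂ h'
  rwa [← fromBlocks_toBlocks (Q.submatrix e e), ← fromBlocks_toBlocks (P.submatrix e e),
    ← Sum.elim_comp_inl_inr (d ∘ e), ← fromBlocks_diagonal, fromBlocks_multiply,
    fromBlocks_multiply, toBlocks_fromBlocks₁₂, toBlocks_fromBlocks₁₂, Matrix.zero_mul,
    add_zero] at this

end Matrix

theorem le_div_of_coupled_bounds {s b x y a c : ℝ} (hs : 0 < s) (hb : 0 ≤ b)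
    (hgap : b ^ 2 < s ^ 2) (hy : s * y ≤ a + x * b) (hx : s * x ≤ c + y * b) :
    x ≤ (s * c + a * b) / (s ^ 2 - b ^ 2) := by
  rw [le_div_iff₀ (sub_pos.2 hgap)]
  nlinarith [mul_le_mul_of_nonneg_left hx hs.le, mul_le_mul_of_nonneg_left hy hb]

/-- Signal subspace bound (Theorem 3.1 of the paper, signal case): with true SVD
`K = U Σ Vᵀ` (nonincreasing nonnegative singular values `σ`, `σ_k > 0`) and approximate
factorization `K = Û [[Σ̂_t, Ŵ₁₂],[Ŵ₂₁, Σ̂₀+W₂₂]] V̂ᵀ`, if `σ_k² > ‖Σ̂₀+W₂₂‖₂²` then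
`‖U_kᵀ Û₀‖₂ ≤ (σ_k ‖Ŵ₂₁‖₂ + ‖Ŵ₁₂‖₂ ‖Σ̂₀+W₂₂‖₂)/(σ_k² − ‖Σ̂₀+W₂₂‖₂²)`. -/
theorem stmt6 (k l : ℕ) (hk : 0 < k)
    (K U V Uh Vh : Matrix (Fin (k + l)) (Fin (k + l)) ℝ)
    (σ : Fin (k + l) → ℝ)
    (St : Matrix (Fin k) (Fin k) ℝ) (W12 : Matrix (Fin k) (Fin l) ℝ)
    (W21 : Matrix (Fin l) (Fin k) ℝ) (S0 W22 : Matrix (Fin l) (Fin l) ℝ)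
    (hU : Uᵀ * U = 1) (hV : Vᵀ * V = 1)
    (hUh : Uhᵀ * Uh = 1) (hVh : Vhᵀ * Vh = 1)
    (hσdec : Antitone σ)
    (hσk : 0 < σ ⟨k - 1, by omega⟩)
    (hK : K = U * Matrix.diagonal σ * Vᵀ)
    (hKh : K = Uh * (Matrix.fromBlocks St W12 W21 (S0 + W22)).submatrix
        finSumFinEquiv.symm finSumFinEquiv.symm * Vhᵀ)
    (hgap : ‖S0 + W22‖ ^ 2 < (σ ⟨k - 1, by omega⟩) ^ 2) :
    ‖(U.submatrix id (Fin.castAdd l))ᵀ * Uh.submatrix id (Fin.natAdd k)‖ ≤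
      (σ ⟨k - 1, by omega⟩ * ‖W21‖ + ‖W12‖ * ‖S0 + W22‖) /
        ((σ ⟨k - 1, by omega⟩) ^ 2 - ‖S0 + W22‖ ^ 2) := by
  set e : Fin k ⊕ Fin l ≃ Fin (k + l) := finSumFinEquiv
  have hfac := hK ▸ hKh
  have hfacT : V * diagonal σ * Uᵀ = Vh * (fromBlocks Stᵀ W21ᵀ W12ᵀ (S0 + W22)ᵀ).submatrix
      e.symm e.symm * Uhᵀ := by
    simpa only [transpose_mul, transpose_transpose, diagonal_transpose, transpose_submatrix,
      fromBlocks_transpose, Matrix.mul_assoc] using congrArg transpose hfac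
  have hY := diagonal_mul_toBlocks₁₂_of_eq_submatrix e
    (mul_transpose_mul_eq_of_factorizations hU hVh hfac)
  have hX := diagonal_mul_toBlocks₁₂_of_eq_submatrix e
    (mul_transpose_mul_eq_of_factorizations hV hUh hfacT)
  have hσ_le : ∀ i, σ ⟨k - 1, by omega⟩ ≤ (σ ∘ e ∘ Sum.inl) i :=
    fun i => hσdec (Fin.le_iff_val_le_val.2 (by simp [e]; omega))
  have hblock : ∀ {A A' : Matrix (Fin (k + l)) (Fin (k + l)) ℝ}, Aᵀ * A = 1 → A'ᵀ * A' = 1 →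
      ‖((Aᵀ * A').submatrix e e).toBlocks₁₁‖ ≤ 1 := fun hA hA' =>
    ((l2_opNorm_toBlocks₁₁_le _).trans (l2_opNorm_submatrix_le _ e.injective e.injective)).trans
      (l2_opNorm_transpose_mul_le_one hA hA')
  have hgoal : (U.submatrix id (Fin.castAdd l))ᵀ * Uh.submatrix id (Fin.natAdd k) =
      ((Uᵀ * Uh).submatrix e e).toBlocks₁₂ := by
    rw [transpose_submatrix, ← submatrix_mul _ _ _ _ _ Function.bijective_id]; rfl
  rw [hgoal]
  refine le_div_of_coupled_bounds hσk (norm_nonneg _) hgap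
    (mul_l2_opNorm_le_of_diagonal_mul_eq hσk hσ_le (hblock hU hUh) hY) ?_
  simpa only [l2_opNorm_transpose] using
    mul_l2_opNorm_le_of_diagonal_mul_eq hσk hσ_le (hblock hV hVh) hX
end

section
/- Operator difference bound: with K_TSVD = U_k Σ_k V_k^T = K V_k V_k^T and K̂_TSVD = Û_k Σ̂_t V̂_k^T = K V̂_k V̂_k^T − Û_0 Ŵ_21 V̂_k^T (in the setting of the block factorization above), one has ‖K_TSVD − K̂_TSVD‖₂ ≤ ‖K‖₂ · ‖V_k^T V̂_0‖₂ + ‖Ŵ_21‖₂. -/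
/-!
Both truncations are rewritten through `K`: `K_TSVD = K Vₖ Vₖᵀ` and
`K̂_TSVD = K V̂ₖ V̂ₖᵀ - Û₀ Ŵ₂₁ V̂ₖᵀ`, so their difference is `K (P - P̂) + Û₀ Ŵ₂₁ V̂ₖᵀ` with
`P = Vₖ Vₖᵀ`, `P̂ = V̂ₖ V̂ₖᵀ`. The second term has norm `‖Ŵ₂₁‖` since `Û₀` and `V̂ₖ` have
orthonormal columns. For the first, `P - P̂ = Vₖ B V̂₀ᵀ - V₀ C V̂ₖᵀ` with `B = Vₖᵀ V̂₀` and
`C = V₀ᵀ V̂ₖ`, and the two terms act on orthogonal subspaces, so `‖P - P̂‖ ≤ max ‖B‖ ‖C‖`.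
Finally `‖C‖ = ‖B‖`: with the square block `A = Vₖᵀ V̂ₖ` one has `CᵀC = 1 - AᵀA` and
`BBᵀ = 1 - AAᵀ`; these have the same spectrum because `AᵀA` and `AAᵀ` have the same
characteristic polynomial, and the norm of a symmetric matrix is its spectral radius.
-/
open Matrix
open scoped Matrix.Norms.L2Operator

namespace Matrix

section Spectral

variable {𝕜 : Type*} [RCLike 𝕜] {n : Type*} [Fintype n] [DecidableEq n]

lemma spectrum_mul_comm {K : Type*} [Field K] (A B : Matrix n n K) :
    spectrum K (A * B) = spectrum K (B * A) := by
  ext r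
  rw [mem_spectrum_iff_isRoot_charpoly, mem_spectrum_iff_isRoot_charpoly, charpoly_mul_comm]

lemma spectralRadius_eq_l2_opNNNorm {A : Matrix n n 𝕜} (hA : IsSelfAdjoint A) :
    spectralRadius 𝕜 A = ‖A‖₊ := by
  rw [cstar_nnnorm_def, ← ContinuousLinearMap.spectralRadius_eq_nnnorm _
      (hA.map (toEuclideanCLM (n := n) (𝕜 := 𝕜))),
    spectralRadius, spectralRadius, AlgEquiv.spectrum_eq]

lemma l2_opNorm_eq_of_spectrum_eq {A B : Matrix n n 𝕜} (hA : IsSelfAdjoint A)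
    (hB : IsSelfAdjoint B) (h : spectrum 𝕜 A = spectrum 𝕜 B) : ‖A‖ = ‖B‖ := by
  have : spectralRadius 𝕜 A = spectralRadius 𝕜 B := by rw [spectralRadius, spectralRadius, h]
  rw [spectralRadius_eq_l2_opNNNorm hA, spectralRadius_eq_l2_opNNNorm hB] at this
  exact congrArg NNReal.toReal (ENNReal.coe_injective this)

end Spectral

section Isometry

variable {𝕜 : Type*} [RCLike 𝕜] {m n p : Type*} [Fintype m] [Fintype n] [Fintype p]

lemma l2_opNorm_eq_of_conjTranspose_mul_add_eq_one [DecidableEq n] [DecidableEq m]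
    {A : Matrix n n 𝕜} {B : Matrix n m 𝕜} {C : Matrix p n 𝕜}
    (h₁ : Aᴴ * A + Cᴴ * C = 1) (h₂ : A * Aᴴ + B * Bᴴ = 1) : ‖C‖ = ‖B‖ := by
  have hsq : ‖Cᴴ * C‖ = ‖B * Bᴴ‖ := by
    refine l2_opNorm_eq_of_spectrum_eq (isHermitian_conjTranspose_mul_self C).isSelfAdjoint
      (isHermitian_mul_conjTranspose_self B).isSelfAdjoint ?_
    rw [eq_sub_of_add_eq' h₁, eq_sub_of_add_eq' h₂, ← map_one (algebraMap 𝕜 _),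
      ← spectrum.singleton_sub_eq, ← spectrum.singleton_sub_eq, spectrum_mul_comm]
  have hB : ‖B * Bᴴ‖ = ‖B‖ * ‖B‖ := by
    simpa [l2_opNorm_conjTranspose] using l2_opNorm_conjTranspose_mul_self Bᴴ
  rw [l2_opNorm_conjTranspose_mul_self, hB] at hsq
  exact (mul_self_inj (norm_nonneg _) (norm_nonneg _)).mp hsq

lemma l2_opNorm_mul_of_conjTranspose_mul_self [DecidableEq n] [DecidableEq p] {Q : Matrix m n 𝕜}
    (hQ : Qᴴ * Q = 1) (M : Matrix n p 𝕜) : ‖Q * M‖ = ‖M‖ := by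
  have h := l2_opNorm_conjTranspose_mul_self (Q * M)
  rw [conjTranspose_mul, Matrix.mul_assoc, ← Matrix.mul_assoc Qᴴ, hQ, Matrix.one_mul,
    l2_opNorm_conjTranspose_mul_self] at h
  exact (mul_self_inj (norm_nonneg _) (norm_nonneg _)).mp h.symm

lemma l2_opNorm_mul_conjTranspose_of_conjTranspose_mul_self [DecidableEq m] [DecidableEq n]
    [DecidableEq p] {R : Matrix m n 𝕜} (hR : Rᴴ * R = 1) (M : Matrix p n 𝕜) : ‖M * Rᴴ‖ = ‖M‖ := by
  rw [← l2_opNorm_conjTranspose, conjTranspose_mul, conjTranspose_conjTranspose,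
    l2_opNorm_mul_of_conjTranspose_mul_self hR, l2_opNorm_conjTranspose]

end Isometry

section Real

variable {m n p q : Type*} [Fintype m] [Fintype n] [Fintype p] [Fintype q]

lemma norm_sq_eq_ofLp_dotProduct (x : EuclideanSpace ℝ n) : ‖x‖ ^ 2 = x.ofLp ⬝ᵥ x.ofLp := by
  rw [← real_inner_self_eq_norm_sq, EuclideanSpace.inner_eq_star_dotProduct, star_trivial]

lemma mulVec_dotProduct_mulVec (Q : Matrix m n ℝ) (R : Matrix m p ℝ) (x : n → ℝ) (y : p → ℝ) :
    Q *ᵥ x ⬝ᵥ R *ᵥ y = x ⬝ᵥ (Qᵀ * R) *ᵥ y := by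
  rw [dotProduct_mulVec, dotProduct_mulVec, ← vecMul_vecMul, vecMul_transpose]

lemma mulVec_dotProduct_self_le [DecidableEq n] (A : Matrix m n ℝ) (x : n → ℝ) :
    A *ᵥ x ⬝ᵥ A *ᵥ x ≤ ‖A‖ ^ 2 * (x ⬝ᵥ x) := by
  have h := pow_le_pow_left₀ (norm_nonneg _) (A.l2_opNorm_mulVec (WithLp.toLp 2 x)) 2
  rwa [mul_pow, norm_sq_eq_ofLp_dotProduct, norm_sq_eq_ofLp_dotProduct] at h

lemma l2_opNorm_le_of_mulVec_dotProduct_self_le [DecidableEq n] {A : Matrix m n ℝ} {c : ℝ}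
    (hc : 0 ≤ c) (h : ∀ x, A *ᵥ x ⬝ᵥ A *ᵥ x ≤ c ^ 2 * (x ⬝ᵥ x)) : ‖A‖ ≤ c := by
  rw [l2_opNorm_def]
  refine ContinuousLinearMap.opNorm_le_bound _ hc fun x => ?_
  refine pow_le_pow_iff_left₀ (norm_nonneg _) (by positivity) two_ne_zero |>.mp ?_
  rw [mul_pow, norm_sq_eq_ofLp_dotProduct, norm_sq_eq_ofLp_dotProduct]
  exact h _

lemma l2_opNorm_add_le_of_orthogonal {p' q' : Type*} [Fintype p'] [Fintype q'] [DecidableEq n]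
    [DecidableEq p] [DecidableEq q] [DecidableEq p'] [DecidableEq q']
    {Q₁ : Matrix m p ℝ} {Q₂ : Matrix m q ℝ} {R₁ : Matrix n p' ℝ} {R₂ : Matrix n q' ℝ}
    (hQ₁ : Q₁ᵀ * Q₁ = 1) (hQ₂ : Q₂ᵀ * Q₂ = 1) (hQ : Q₁ᵀ * Q₂ = 0) (hR : R₁ * R₁ᵀ + R₂ * R₂ᵀ = 1)
    {M : Matrix p p' ℝ} {N : Matrix q q' ℝ} {c : ℝ} (hM : ‖M‖ ≤ c) (hN : ‖N‖ ≤ c) :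
    ‖Q₁ * M * R₁ᵀ + Q₂ * N * R₂ᵀ‖ ≤ c := by
  refine l2_opNorm_le_of_mulVec_dotProduct_self_le ((norm_nonneg _).trans hM) fun x => ?_
  set u := R₁ᵀ *ᵥ x
  set w := R₂ᵀ *ᵥ x
  have hx : x ⬝ᵥ x = u ⬝ᵥ u + w ⬝ᵥ w := by
    rw [mulVec_dotProduct_mulVec, mulVec_dotProduct_mulVec, transpose_transpose,
      transpose_transpose, ← dotProduct_add, ← add_mulVec, hR, one_mulVec]
  have hQ' : Q₂ᵀ * Q₁ = 0 := by
    rw [← transpose_transpose Q₁, ← transpose_mul, hQ, transpose_zero]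
  calc (Q₁ * M * R₁ᵀ + Q₂ * N * R₂ᵀ) *ᵥ x ⬝ᵥ (Q₁ * M * R₁ᵀ + Q₂ * N * R₂ᵀ) *ᵥ x
      = M *ᵥ u ⬝ᵥ M *ᵥ u + N *ᵥ w ⬝ᵥ N *ᵥ w := by
        simp only [add_mulVec, ← mulVec_mulVec, add_dotProduct, dotProduct_add,
          mulVec_dotProduct_mulVec Q₁, mulVec_dotProduct_mulVec Q₂, hQ₁, hQ₂, hQ, hQ',
          one_mulVec, zero_mulVec, dotProduct_zero, add_zero, zero_add, u, w]
    _ ≤ ‖M‖ ^ 2 * (u ⬝ᵥ u) + ‖N‖ ^ 2 * (w ⬝ᵥ w) :=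
        add_le_add (mulVec_dotProduct_self_le M u) (mulVec_dotProduct_self_le N w)
    _ ≤ c ^ 2 * (u ⬝ᵥ u) + c ^ 2 * (w ⬝ᵥ w) := by
        gcongr <;> exact dotProduct_self_star_nonneg _
    _ = c ^ 2 * (x ⬝ᵥ x) := by rw [hx, mul_add]

end Real

section Split

variable {n p q : Type*} [Fintype n] [Fintype p] [Fintype q] [DecidableEq n] [DecidableEq p]
  [DecidableEq q]

structure IsOrthogonalColumnSplit (V₁ : Matrix n p ℝ) (V₂ : Matrix n q ℝ) : Prop where
  transpose_mul_left : V₁ᵀ * V₁ = 1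
  transpose_mul_right : V₂ᵀ * V₂ = 1
  transpose_mul_cross : V₁ᵀ * V₂ = 0
  mul_transpose_add : V₁ * V₁ᵀ + V₂ * V₂ᵀ = 1

lemma l2_opNorm_sub_mul_transpose_le {V₁ W₁ : Matrix n p ℝ} {V₂ W₂ : Matrix n q ℝ}
    (hV : IsOrthogonalColumnSplit V₁ V₂) (hW : IsOrthogonalColumnSplit W₁ W₂) :
    ‖V₁ * V₁ᵀ - W₁ * W₁ᵀ‖ ≤ ‖V₁ᵀ * W₂‖ := by
  have hdiff : V₁ * V₁ᵀ - W₁ * W₁ᵀ = V₁ * (V₁ᵀ * W₂) * W₂ᵀ + V₂ * -(V₂ᵀ * W₁) * W₁ᵀ := by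
    calc V₁ * V₁ᵀ - W₁ * W₁ᵀ
        = V₁ * V₁ᵀ * (W₁ * W₁ᵀ + W₂ * W₂ᵀ) - (V₁ * V₁ᵀ + V₂ * V₂ᵀ) * (W₁ * W₁ᵀ) := by
          rw [hW.mul_transpose_add, hV.mul_transpose_add, Matrix.mul_one, Matrix.one_mul]
      _ = _ := by
          simp only [Matrix.mul_add, Matrix.add_mul, Matrix.mul_neg, Matrix.neg_mul,
            Matrix.mul_assoc]
          abel
  have hblock : ‖V₂ᵀ * W₁‖ = ‖V₁ᵀ * W₂‖ := by
    refine l2_opNorm_eq_of_conjTranspose_mul_add_eq_one (A := V₁ᵀ * W₁) ?_ ?_ <;>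
      simp only [conjTranspose_eq_transpose_of_trivial, transpose_mul, transpose_transpose]
    · rw [Matrix.mul_assoc, Matrix.mul_assoc, ← Matrix.mul_assoc V₁, ← Matrix.mul_assoc V₂,
        ← Matrix.mul_add, ← Matrix.add_mul, hV.mul_transpose_add, Matrix.one_mul,
        hW.transpose_mul_left]
    · rw [Matrix.mul_assoc, Matrix.mul_assoc, ← Matrix.mul_assoc W₁, ← Matrix.mul_assoc W₂,
        ← Matrix.mul_add, ← Matrix.add_mul, hW.mul_transpose_add, Matrix.one_mul,
        hV.transpose_mul_left]
  rw [hdiff]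
  exact l2_opNorm_add_le_of_orthogonal hV.transpose_mul_left hV.transpose_mul_right
    hV.transpose_mul_cross (by rw [add_comm, hW.mul_transpose_add]) le_rfl
    (by rw [norm_neg, hblock])

end Split

lemma isOrthogonalColumnSplit_castAdd_natAdd {k l : ℕ}
    {V : Matrix (Fin (k + l)) (Fin (k + l)) ℝ} (hV : Vᵀ * V = 1) :
    IsOrthogonalColumnSplit (V.submatrix id (Fin.castAdd l)) (V.submatrix id (Fin.natAdd k)) := by
  have hblock : ∀ {r s : ℕ} (f : Fin r → Fin (k + l)) (g : Fin s → Fin (k + l)),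
      (V.submatrix id f)ᵀ * V.submatrix id g = (1 : Matrix _ _ ℝ).submatrix f g := by
    intro r s f g
    rw [← hV, transpose_submatrix, submatrix_mul _ _ _ id _ Function.bijective_id]
  refine ⟨?_, ?_, ?_, ?_⟩
  · rw [hblock, submatrix_one _ (Fin.castAdd_injective k l)]
  · rw [hblock, submatrix_one _ (Fin.natAdd_injective _ _)]
  · rw [hblock]
    ext i j
    simp only [submatrix_apply, one_apply, Fin.ext_iff, Fin.val_castAdd, Fin.val_natAdd,
      zero_apply, ite_eq_right_iff, one_ne_zero, imp_false]
    omega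
  · rw [← mul_eq_one_comm.mp hV]
    ext i j
    simp [mul_apply, Fin.sum_univ_add]

lemma mul_submatrix_id {R : Type*} [NonUnitalNonAssocSemiring R] {l m n o : Type*} [Fintype m]
    (A : Matrix l m R) (B : Matrix m n R) (f : o → n) :
    A * B.submatrix id f = (A * B).submatrix id f := by
  rw [submatrix_mul _ _ _ id _ Function.bijective_id, submatrix_id_id]

lemma submatrix_id_mul_diagonal {R : Type*} [NonUnitalNonAssocSemiring R] {l m o : Type*}
    [Fintype m] [Fintype o] [DecidableEq m] [DecidableEq o] (A : Matrix l m R) (d : m → R)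
    (f : o → m) :
    (A * diagonal d).submatrix id f = A.submatrix id f * diagonal fun j => d (f j) := by
  ext i j
  simp [mul_diagonal]

lemma submatrix_castAdd_mul_fromBlocks {R : Type*} [NonUnitalNonAssocSemiring R] {m : Type*}
    {k l : ℕ} (X : Matrix m (Fin (k + l)) R) (A : Matrix (Fin k) (Fin k) R)
    (B : Matrix (Fin k) (Fin l) R) (C : Matrix (Fin l) (Fin k) R) (D : Matrix (Fin l) (Fin l) R) :
    (X * (fromBlocks A B C D).submatrix finSumFinEquiv.symm finSumFinEquiv.symm).submatrix id
        (Fin.castAdd l) =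
      X.submatrix id (Fin.castAdd l) * A + X.submatrix id (Fin.natAdd k) * C := by
  ext i j
  simp [mul_apply, Fin.sum_univ_add]

end Matrix

/-- Operator difference bound:
`‖K_TSVD − K̂_TSVD‖₂ ≤ ‖K‖₂ ‖V_kᵀ V̂₀‖₂ + ‖Ŵ₂₁‖₂` where `K_TSVD = U_k Σ_k V_kᵀ`
and `K̂_TSVD = Û_k Σ̂_t V̂_kᵀ`. -/
theorem stmt10 (k l : ℕ)
    (K U V Uh Vh : Matrix (Fin (k + l)) (Fin (k + l)) ℝ)
    (σ : Fin (k + l) → ℝ)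
    (St : Matrix (Fin k) (Fin k) ℝ) (W12 : Matrix (Fin k) (Fin l) ℝ)
    (W21 : Matrix (Fin l) (Fin k) ℝ) (S0 W22 : Matrix (Fin l) (Fin l) ℝ)
    (hV : Vᵀ * V = 1)
    (hUh : Uhᵀ * Uh = 1) (hVh : Vhᵀ * Vh = 1)
    (hK : K = U * Matrix.diagonal σ * Vᵀ)
    (hKh : K = Uh * (Matrix.fromBlocks St W12 W21 (S0 + W22)).submatrix
        finSumFinEquiv.symm finSumFinEquiv.symm * Vhᵀ) :
    ‖U.submatrix id (Fin.castAdd l) * (Matrix.diagonal fun j : Fin k => σ (Fin.castAdd l j)) *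
          (V.submatrix id (Fin.castAdd l))ᵀ -
        Uh.submatrix id (Fin.castAdd l) * St * (Vh.submatrix id (Fin.castAdd l))ᵀ‖ ≤
      ‖K‖ * ‖(V.submatrix id (Fin.castAdd l))ᵀ * Vh.submatrix id (Fin.natAdd k)‖ + ‖W21‖ := by
  set Vk := V.submatrix id (Fin.castAdd l)
  set Vhk := Vh.submatrix id (Fin.castAdd l)
  set Uh0 := Uh.submatrix id (Fin.natAdd k)
  have hKVk :
      K * Vk = U.submatrix id (Fin.castAdd l) * diagonal fun j => σ (Fin.castAdd l j) := by
    rw [mul_submatrix_id, hK, Matrix.mul_assoc, hV, Matrix.mul_one, submatrix_id_mul_diagonal]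
  have hKVhk : K * Vhk = Uh.submatrix id (Fin.castAdd l) * St + Uh0 * W21 := by
    rw [mul_submatrix_id, hKh, Matrix.mul_assoc _ Vhᵀ, hVh, Matrix.mul_one,
      submatrix_castAdd_mul_fromBlocks]
  have hUh0 : Uh0ᵀ * Uh0 = 1 := (isOrthogonalColumnSplit_castAdd_natAdd hUh).transpose_mul_right
  have hVhk : Vhkᵀ * Vhk = 1 := (isOrthogonalColumnSplit_castAdd_natAdd hVh).transpose_mul_left
  rw [← hKVk, eq_sub_of_add_eq hKVhk.symm]
  calc _ = ‖K * (Vk * Vkᵀ - Vhk * Vhkᵀ) + Uh0 * W21 * Vhkᵀ‖ := by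
        congr 1
        simp only [Matrix.mul_sub, Matrix.sub_mul, Matrix.mul_assoc]
        abel
    _ ≤ ‖K‖ * ‖Vk * Vkᵀ - Vhk * Vhkᵀ‖ + ‖W21‖ := by
        refine norm_add_le_of_le (l2_opNorm_mul _ _) (le_of_eq ?_)
        rw [← conjTranspose_eq_transpose_of_trivial,
          l2_opNorm_mul_conjTranspose_of_conjTranspose_mul_self,
          l2_opNorm_mul_of_conjTranspose_mul_self] <;>
          rwa [conjTranspose_eq_transpose_of_trivial]
    _ ≤ _ := by
        gcongr
        exact l2_opNorm_sub_mul_transpose_le (isOrthogonalColumnSplit_castAdd_natAdd hV)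
          (isOrthogonalColumnSplit_castAdd_natAdd hVh)
end
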